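/- For jointly distributed finite random variables, H(Z_0, X) + H(Z_1, X) ≥ H(Z_0, Z_1, W, X) + H(W, X) whenever W is a deterministic function of (Z_0, X) and also a deterministic function of (Z_1, X). -/

import Mathlib

open scoped Classical BigOperators

section Framework

variable {Ω : Type*} [Fintype Ω]

/-- `p` is a probability mass function on the finite sample space `Ω`. -/
def IsPMF (p : Ω → ℝ) : Prop := (∀ ω, 0 ≤ p ω) ∧ ∑ ω, p ω = 1

/-- Probability of the event `E` under `p`. -/
noncomputable def pr (p : Ω → ℝ) (E : Ω → Prop) : ℝ := ∑ ω, if E ω then p ω else 0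

/-- Base-2 Shannon entropy of the random variable `X` under `p`
(with the convention `0 · log 0 = 0`). -/
noncomputable def ent {S : Type*} [Fintype S] (p : Ω → ℝ) (X : Ω → S) : ℝ :=
  - ∑ s : S, pr p (fun ω => X ω = s) * Real.logb 2 (pr p (fun ω => X ω = s))

/-- Conditional Shannon entropy `H(X | Y) = H(X, Y) - H(Y)`. -/
noncomputable def condEnt {S T : Type*} [Fintype S] [Fintype T]
    (p : Ω → ℝ) (X : Ω → S) (Y : Ω → T) : ℝ :=
  ent p (fun ω => (X ω, Y ω)) - ent p Y

/-- Mutual information `I(X; Y) = H(X) + H(Y) - H(X, Y)`. -/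
noncomputable def mutInf {S T : Type*} [Fintype S] [Fintype T]
    (p : Ω → ℝ) (X : Ω → S) (Y : Ω → T) : ℝ :=
  ent p X + ent p Y - ent p (fun ω => (X ω, Y ω))

/-- Independence of the random variables `X` and `Y` under `p`. -/
def IndepE {S T : Type*} (p : Ω → ℝ) (X : Ω → S) (Y : Ω → T) : Prop :=
  ∀ s t, pr p (fun ω => X ω = s ∧ Y ω = t) =
    pr p (fun ω => X ω = s) * pr p (fun ω => Y ω = t)

/-- The pmf obtained from `p` by conditioning on the event `E`. -/
noncomputable def condPMF (p : Ω → ℝ) (E : Ω → Prop) : Ω → ℝ :=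
  fun ω => if E ω then p ω / pr p E else 0

end Framework

section Aux
variable {Ω : Type*} [Fintype Ω]


lemma pr_nonneg (p : Ω → ℝ) (hp : ∀ ω, 0 ≤ p ω) (E : Ω → Prop) : 0 ≤ pr p E :=
  Finset.sum_nonneg fun ω _ => by split <;> simp [hp ω]

lemma pr_mono (p : Ω → ℝ) (hp : ∀ ω, 0 ≤ p ω) {E F : Ω → Prop} (h : ∀ ω, E ω → F ω) :
    pr p E ≤ pr p F := by
  refine Finset.sum_le_sum fun ω _ => ?_
  by_cases hE : E ω
  · simp [hE, h ω hE]
  · simp only [hE, if_false]; split <;> simp [hp ω]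

lemma le_pr (p : Ω → ℝ) (hp : ∀ ω, 0 ≤ p ω) {S : Type*} (Y : Ω → S) (ω0 : Ω) :
    p ω0 ≤ pr p (fun ω => Y ω = Y ω0) := by
  have := Finset.single_le_sum (f := fun ω => if Y ω = Y ω0 then p ω else 0)
    (fun ω _ => by split <;> simp [hp ω]) (Finset.mem_univ ω0)
  simpa [pr] using this

lemma sum_group {S : Type*} [Fintype S] (p : Ω → ℝ) (Y : Ω → S) (f : S → ℝ) :
    ∑ ω, p ω * f (Y ω) = ∑ s, pr p (fun ω => Y ω = s) * f s := by
  unfold pr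
  simp only [Finset.sum_mul, ite_mul, zero_mul]
  rw [Finset.sum_comm]
  exact Finset.sum_congr rfl fun ω _ => by simp [Finset.sum_ite_eq]

lemma ent_eq {S : Type*} [Fintype S] (p : Ω → ℝ) (X : Ω → S) :
    ent p X = - ∑ ω, p ω * Real.logb 2 (pr p (fun ω' => X ω' = X ω)) := by
  unfold ent
  rw [sum_group p X (fun s => Real.logb 2 (pr p (fun ω => X ω = s)))]

lemma pr_fst {S U : Type*} [Fintype S] (p : Ω → ℝ) (A : Ω → S) (C : Ω → U) (c : U) :
    ∑ a : S, pr p (fun ω => (A ω, C ω) = (a, c)) = pr p (fun ω => C ω = c) := by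
  unfold pr
  rw [Finset.sum_comm]
  refine Finset.sum_congr rfl fun ω _ => ?_
  by_cases h : C ω = c
  · simp [Prod.ext_iff, h, Finset.sum_ite_eq]
  · simp [Prod.ext_iff, h]

lemma pr_total {U : Type*} [Fintype U] (p : Ω → ℝ) (C : Ω → U) :
    ∑ c : U, pr p (fun ω => C ω = c) = ∑ ω, p ω := by
  unfold pr
  rw [Finset.sum_comm]
  exact Finset.sum_congr rfl fun ω _ => by simp [Finset.sum_ite_eq]

lemma ent_comp_inj {S T : Type*} [Fintype S] [Fintype T] (p : Ω → ℝ) (Y : Ω → S)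
    (g : S → T) (hg : Function.Injective g) :
    ent p (fun ω => g (Y ω)) = ent p Y := by
  unfold ent
  have hpr : ∀ s, pr p (fun ω => g (Y ω) = g s) = pr p (fun ω => Y ω = s) := by
    intro s
    unfold pr
    exact Finset.sum_congr rfl fun ω _ => by simp [hg.eq_iff]
  rw [← Finset.sum_subset (Finset.subset_univ (Finset.univ.image g))
      (fun t _ ht => ?_), Finset.sum_image (fun s _ s' _ h => hg h)]
  · congr 1
    exact Finset.sum_congr rfl fun s _ => by rw [hpr s]
  · have : pr p (fun ω => g (Y ω) = t) = 0 := by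
      unfold pr
      refine Finset.sum_eq_zero fun ω _ => ?_
      have : ¬ g (Y ω) = t := fun h => ht (by simp [← h])
      simp [this]
    simp [this]


lemma sum_reorder {S T U : Type*} [Fintype S] [Fintype T] [Fintype U] (f : S → T → U → ℝ) :
    ∑ s : S × T × U, f s.1 s.2.1 s.2.2 = ∑ c : U, ∑ a : S, ∑ b : T, f a b c := by
  rw [Fintype.sum_prod_type]
  simp_rw [Fintype.sum_prod_type]
  calc ∑ a : S, ∑ b : T, ∑ c : U, f a b c
      = ∑ a : S, ∑ c : U, ∑ b : T, f a b c :=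
        Finset.sum_congr rfl fun a _ => Finset.sum_comm
    _ = ∑ c : U, ∑ a : S, ∑ b : T, f a b c := Finset.sum_comm

lemma submod {S T U : Type*} [Fintype S] [Fintype T] [Fintype U]
    (p : Ω → ℝ) (hp0 : ∀ ω, 0 ≤ p ω) (hp1 : ∑ ω, p ω = 1)
    (A : Ω → S) (B : Ω → T) (C : Ω → U) :
    ent p (fun ω => (A ω, (B ω, C ω))) + ent p C ≤
      ent p (fun ω => (A ω, C ω)) + ent p (fun ω => (B ω, C ω)) := by
  set fa : Ω → ℝ := fun ω => pr p (fun ω' => (A ω', C ω') = (A ω, C ω)) with hfa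
  set fb : Ω → ℝ := fun ω => pr p (fun ω' => (B ω', C ω') = (B ω, C ω)) with hfb
  set fc : Ω → ℝ := fun ω => pr p (fun ω' => C ω' = C ω) with hfc
  set fd : Ω → ℝ := fun ω => pr p (fun ω' => (A ω', (B ω', C ω')) = (A ω, (B ω, C ω))) with hfd
  -- the ratio function on values
  set R : S × T × U → ℝ := fun s =>
    pr p (fun ω => (A ω, C ω) = (s.1, s.2.2)) * pr p (fun ω => (B ω, C ω) = (s.2.1, s.2.2)) /
      (pr p (fun ω => (A ω, (B ω, C ω)) = s) * pr p (fun ω => C ω = s.2.2)) with hR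
  have hRω : ∀ ω, R (A ω, (B ω, C ω)) = fa ω * fb ω / (fd ω * fc ω) := fun ω => rfl
  -- key bound : ∑ p ω * r ω ≤ 1
  have key : ∑ ω, p ω * (fa ω * fb ω / (fd ω * fc ω)) ≤ 1 := by
    have h1 : ∑ ω, p ω * (fa ω * fb ω / (fd ω * fc ω))
        = ∑ s : S × T × U, pr p (fun ω => (A ω, (B ω, C ω)) = s) * R s := by
      rw [← sum_group p (fun ω => (A ω, (B ω, C ω))) R]
    rw [h1]
    have h2 : ∀ s : S × T × U, pr p (fun ω => (A ω, (B ω, C ω)) = s) * R s ≤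
        pr p (fun ω => (A ω, C ω) = (s.1, s.2.2)) * pr p (fun ω => (B ω, C ω) = (s.2.1, s.2.2)) /
          pr p (fun ω => C ω = s.2.2) := by
      intro s
      set d := pr p (fun ω => (A ω, (B ω, C ω)) = s) with hd
      by_cases hd0 : d = 0
      · rw [hd0, zero_mul]
        exact div_nonneg (mul_nonneg (pr_nonneg p hp0 _) (pr_nonneg p hp0 _)) (pr_nonneg p hp0 _)
      · have hdpos : 0 < d := lt_of_le_of_ne (pr_nonneg p hp0 _) (Ne.symm hd0)
        have hcd : d ≤ pr p (fun ω => C ω = s.2.2) :=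
          pr_mono p hp0 fun ω h => by rw [← h]
        have hcpos : 0 < pr p (fun ω => C ω = s.2.2) := lt_of_lt_of_le hdpos hcd
        rw [hR]
        dsimp only
        rw [← hd]
        refine le_of_eq ?_
        field_simp
    calc ∑ s : S × T × U, pr p (fun ω => (A ω, (B ω, C ω)) = s) * R s
        ≤ ∑ s : S × T × U,
            pr p (fun ω => (A ω, C ω) = (s.1, s.2.2)) * pr p (fun ω => (B ω, C ω) = (s.2.1, s.2.2)) /
              pr p (fun ω => C ω = s.2.2) := Finset.sum_le_sum fun s _ => h2 s
      _ = ∑ c : U, ∑ a : S, ∑ b : T,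
            pr p (fun ω => (A ω, C ω) = (a, c)) * pr p (fun ω => (B ω, C ω) = (b, c)) /
              pr p (fun ω => C ω = c) := by
          exact sum_reorder (fun a b c =>
            pr p (fun ω => (A ω, C ω) = (a, c)) * pr p (fun ω => (B ω, C ω) = (b, c)) /
              pr p (fun ω => C ω = c))
      _ = ∑ c : U, pr p (fun ω => C ω = c) * pr p (fun ω => C ω = c) / pr p (fun ω => C ω = c) := by
          refine Finset.sum_congr rfl fun c _ => ?_
          simp_rw [← Finset.sum_div, ← Finset.mul_sum, ← Finset.sum_mul]
          rw [pr_fst p A C c, pr_fst p B C c]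
      _ ≤ ∑ c : U, pr p (fun ω => C ω = c) := by
          refine Finset.sum_le_sum fun c _ => ?_
          by_cases h : pr p (fun ω => C ω = c) = 0
          · simp [h]
          · rw [mul_div_assoc, div_self h, mul_one]
      _ = 1 := by rw [pr_total p C, hp1]
  -- pointwise log inequality
  have hlog2 : (0:ℝ) < Real.log 2 := Real.log_pos (by norm_num)
  have point : ∀ ω, p ω * (Real.logb 2 (fa ω) + Real.logb 2 (fb ω)
        - Real.logb 2 (fd ω) - Real.logb 2 (fc ω))
      ≤ p ω * ((fa ω * fb ω / (fd ω * fc ω)) - 1) / Real.log 2 := by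
    intro ω
    by_cases hω : p ω = 0
    · simp [hω]
    · have hpω : 0 < p ω := lt_of_le_of_ne (hp0 ω) (Ne.symm hω)
      have hdω : 0 < fd ω := lt_of_lt_of_le hpω (le_pr p hp0 _ ω)
      have hfaω : 0 < fa ω := lt_of_lt_of_le hdω (pr_mono p hp0 fun ω' h => by
        simp only [Prod.ext_iff] at h ⊢; exact ⟨h.1, h.2.2⟩)
      have hfbω : 0 < fb ω := lt_of_lt_of_le hdω (pr_mono p hp0 fun ω' h => by
        simp only [Prod.ext_iff] at h ⊢; exact ⟨h.2.1, h.2.2⟩)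
      have hfcω : 0 < fc ω := lt_of_lt_of_le hdω (pr_mono p hp0 fun ω' h => by
        simp only [Prod.ext_iff] at h; exact h.2.2)
      set r := fa ω * fb ω / (fd ω * fc ω) with hr
      have hrpos : 0 < r := by positivity
      have hlogb : Real.logb 2 (fa ω) + Real.logb 2 (fb ω)
          - Real.logb 2 (fd ω) - Real.logb 2 (fc ω) = Real.logb 2 r := by
        rw [hr, Real.logb_div (by positivity) (by positivity),
          Real.logb_mul hfaω.ne' hfbω.ne', Real.logb_mul hdω.ne' hfcω.ne']
        ring
      rw [hlogb, Real.logb, ← mul_div_assoc]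
      gcongr
      exact Real.log_le_sub_one_of_pos hrpos
  have sum_le : ∑ ω, p ω * (Real.logb 2 (fa ω) + Real.logb 2 (fb ω)
      - Real.logb 2 (fd ω) - Real.logb 2 (fc ω)) ≤ 0 := by
    calc ∑ ω, p ω * (Real.logb 2 (fa ω) + Real.logb 2 (fb ω)
          - Real.logb 2 (fd ω) - Real.logb 2 (fc ω))
        ≤ ∑ ω, p ω * ((fa ω * fb ω / (fd ω * fc ω)) - 1) / Real.log 2 :=
          Finset.sum_le_sum fun ω _ => point ω
      _ = (∑ ω, p ω * (fa ω * fb ω / (fd ω * fc ω)) - 1) / Real.log 2 := by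
          rw [← Finset.sum_div]
          congr 1
          have h3 : ∑ ω, p ω * (fa ω * fb ω / (fd ω * fc ω) - 1)
              = ∑ ω, p ω * (fa ω * fb ω / (fd ω * fc ω)) - ∑ ω, p ω := by
            rw [← Finset.sum_sub_distrib]
            exact Finset.sum_congr rfl fun ω _ => by ring
          rw [h3, hp1]
      _ ≤ 0 := div_nonpos_of_nonpos_of_nonneg (by linarith [key]) hlog2.le
  have expand : ∑ ω, p ω * (Real.logb 2 (fa ω) + Real.logb 2 (fb ω)
      - Real.logb 2 (fd ω) - Real.logb 2 (fc ω))
      = (∑ ω, p ω * Real.logb 2 (fa ω)) + (∑ ω, p ω * Real.logb 2 (fb ω))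
        - (∑ ω, p ω * Real.logb 2 (fd ω)) - (∑ ω, p ω * Real.logb 2 (fc ω)) := by
    simp only [mul_add, mul_sub, Finset.sum_add_distrib, Finset.sum_sub_distrib]
  have eAC : ent p (fun ω => (A ω, C ω)) = -∑ ω, p ω * Real.logb 2 (fa ω) := ent_eq p _
  have eBC : ent p (fun ω => (B ω, C ω)) = -∑ ω, p ω * Real.logb 2 (fb ω) := ent_eq p _
  have eC : ent p C = -∑ ω, p ω * Real.logb 2 (fc ω) := ent_eq p _
  have eABC : ent p (fun ω => (A ω, (B ω, C ω))) = -∑ ω, p ω * Real.logb 2 (fd ω) := ent_eq p _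
  rw [eAC, eBC, eC, eABC]
  linarith [sum_le, expand]


end Aux

/-- If `W` is a deterministic function of `(Z_0, X)` and of `(Z_1, X)`, then
`H(Z_0, X) + H(Z_1, X) ≥ H(Z_0, Z_1, W, X) + H(W, X)`. -/
theorem stmt9 {Ω Z0T Z1T WT XT : Type*} [Fintype Ω]
    [Fintype Z0T] [Fintype Z1T] [Fintype WT] [Fintype XT]
    (p : Ω → ℝ) (hp : IsPMF p)
    (Z0 : Ω → Z0T) (Z1 : Ω → Z1T) (W : Ω → WT) (X : Ω → XT)
    (h0 : condEnt p W (fun ω => (Z0 ω, X ω)) = 0)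
    (h1 : condEnt p W (fun ω => (Z1 ω, X ω)) = 0) :
    ent p (fun ω => (Z0 ω, X ω)) + ent p (fun ω => (Z1 ω, X ω))
      ≥ ent p (fun ω => (Z0 ω, Z1 ω, W ω, X ω)) + ent p (fun ω => (W ω, X ω)) := by
  obtain ⟨hp0, hp1⟩ := hp
  have h0' : ent p (fun ω => (W ω, (Z0 ω, X ω))) = ent p (fun ω => (Z0 ω, X ω)) := by
    have h : ent p (fun ω => (W ω, (Z0 ω, X ω))) - ent p (fun ω => (Z0 ω, X ω)) = 0 := h0
    linarith
  have h1' : ent p (fun ω => (W ω, (Z1 ω, X ω))) = ent p (fun ω => (Z1 ω, X ω)) := by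
    have h : ent p (fun ω => (W ω, (Z1 ω, X ω))) - ent p (fun ω => (Z1 ω, X ω)) = 0 := h1
    linarith
  have g0inj : Function.Injective
      (fun s : WT × (Z0T × XT) => ((s.2.1, (s.1, s.2.2)) : Z0T × (WT × XT))) := by
    intro a b h
    simp only [Prod.ext_iff] at h ⊢
    exact ⟨h.2.1, h.1, h.2.2⟩
  have g1inj : Function.Injective
      (fun s : WT × (Z1T × XT) => ((s.2.1, (s.1, s.2.2)) : Z1T × (WT × XT))) := by
    intro a b h
    simp only [Prod.ext_iff] at h ⊢
    exact ⟨h.2.1, h.1, h.2.2⟩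
  have e0 : ent p (fun ω => (Z0 ω, (W ω, X ω))) = ent p (fun ω => (Z0 ω, X ω)) := by
    rw [← h0']
    exact ent_comp_inj p (fun ω => (W ω, (Z0 ω, X ω)))
      (fun s => (s.2.1, (s.1, s.2.2))) g0inj
  have e1 : ent p (fun ω => (Z1 ω, (W ω, X ω))) = ent p (fun ω => (Z1 ω, X ω)) := by
    rw [← h1']
    exact ent_comp_inj p (fun ω => (W ω, (Z1 ω, X ω)))
      (fun s => (s.2.1, (s.1, s.2.2))) g1inj
  have sub : ent p (fun ω => (Z0 ω, (Z1 ω, (W ω, X ω)))) + ent p (fun ω => (W ω, X ω))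
      ≤ ent p (fun ω => (Z0 ω, (W ω, X ω))) + ent p (fun ω => (Z1 ω, (W ω, X ω))) :=
    submod p hp0 hp1 Z0 Z1 (fun ω => (W ω, X ω))
  have goal : ent p (fun ω => (Z0 ω, (Z1 ω, (W ω, X ω)))) + ent p (fun ω => (W ω, X ω))
      ≤ ent p (fun ω => (Z0 ω, X ω)) + ent p (fun ω => (Z1 ω, X ω)) := by
    rw [← e0, ← e1]; exact sub
  exact goal
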